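/- arXiv:2105.01049 — 4 statements merged into one kernel-verified Lean document; each statement's English description precedes it below -/
import Mathlib

section
/- (No-Free-Lunch theorem for learning linear optical unitaries from coherent-state training data.) Let m ≥ 1, let 0 ≤ k ≤ 2m, and fix any O ∈ O(2m). For Y ∈ O(2m−k), let T_Y := (I_k ⊕ Y)·O ∈ O(2m); these are exactly the orthogonal matrices that agree with O on the k-dimensional subspace spanned by the first k standard basis row vectors transported appropriately, corresponding to a learner that matches the target O perfectly on k linearly independent coherent-state training vectors. Then the Haar average of the risk satisfies ∫_{O(2m−k)} R_O(T_Y) dμ(Y) = 1/2 − k/(4m), where R_O(T) = 1/2 − Tr(T Oᵀ)/(4m). -/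
/-!
Since `O Oᵀ = I`, `Tr(T_Y Oᵀ) = Tr(I_k ⊕ Y) = k + Tr Y`, so it suffices that the Haar
average of `Tr Y` over `O(n)` vanishes. It does, because left translation by `-I ∈ O(n)`
preserves the Haar measure and negates the trace.
-/

open MeasureTheory Matrix

instance matrixMeasurableSpace (n m : ℕ) : MeasurableSpace (Matrix (Fin n) (Fin m) ℝ) :=
  MeasurableSpace.pi

instance matrixBorelSpace (n m : ℕ) : BorelSpace (Matrix (Fin n) (Fin m) ℝ) :=
  Pi.borelSpace

namespace Matrix

variable {l n R : Type*} [Fintype l] [Fintype n] [AddCommMonoid R]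

theorem trace_reindex (e : l ≃ n) (A : Matrix l l R) : (reindex e e A).trace = A.trace :=
  e.symm.sum_comp fun i => A i i

theorem trace_fromBlocks_zero (A : Matrix l l R) (D : Matrix n n R) :
    (fromBlocks A 0 0 D).trace = A.trace + D.trace :=
  Fintype.sum_sum_type _

end Matrix

namespace Matrix.orthogonalGroup

variable {n : ℕ}

theorem abs_trace_le (Y : orthogonalGroup (Fin n) ℝ) :
    |(Y : Matrix (Fin n) (Fin n) ℝ).trace| ≤ n :=
  calc |(Y : Matrix (Fin n) (Fin n) ℝ).trace|
      ≤ ∑ i, |(Y : Matrix (Fin n) (Fin n) ℝ) i i| := Finset.abs_sum_le_sum_abs _ _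
    _ ≤ ∑ _i : Fin n, (1 : ℝ) :=
        Finset.sum_le_sum fun i _ => entry_norm_bound_of_unitary Y.2 i i
    _ = n := by simp

theorem integrable_trace (μ : Measure (orthogonalGroup (Fin n) ℝ)) [IsFiniteMeasure μ] :
    Integrable (fun Y : orthogonalGroup (Fin n) ℝ => (Y : Matrix (Fin n) (Fin n) ℝ).trace) μ :=
  Integrable.mono' (integrable_const (n : ℝ))
    (continuous_subtype_val.matrix_trace.measurable.aestronglyMeasurable)
    (ae_of_all _ abs_trace_le)

theorem integral_trace_eq_zero (μ : Measure (orthogonalGroup (Fin n) ℝ))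
    [μ.IsMulLeftInvariant] :
    ∫ Y, (Y : Matrix (Fin n) (Fin n) ℝ).trace ∂μ = 0 := by
  let negOne : orthogonalGroup (Fin n) ℝ := ⟨-1, by simp [mem_orthogonalGroup_iff]⟩
  have h := integral_mul_left_eq_self (μ := μ)
    (fun Y : orthogonalGroup (Fin n) ℝ => (Y : Matrix (Fin n) (Fin n) ℝ).trace) negOne
  simp only [negOne, Submonoid.coe_mul, neg_mul, one_mul, trace_neg, integral_neg] at h
  linarith

end Matrix.orthogonalGroup

theorem nfl_linear_optical_coherent_states_general
    (m k : ℕ) (hk : k ≤ 2 * m)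
    (O : Matrix (Fin (2 * m)) (Fin (2 * m)) ℝ)
    (hO : O ∈ Matrix.orthogonalGroup (Fin (2 * m)) ℝ)
    (μ : Measure (Matrix.orthogonalGroup (Fin (2 * m - k)) ℝ))
    [μ.IsHaarMeasure] [IsProbabilityMeasure μ] :
    ∫ Y, (1 / 2 -
        ((Matrix.reindex (finSumFinEquiv.trans (finCongr (Nat.add_sub_cancel' hk)))
            (finSumFinEquiv.trans (finCongr (Nat.add_sub_cancel' hk)))
            (Matrix.fromBlocks (1 : Matrix (Fin k) (Fin k) ℝ) 0 0
              ((Y : Matrix (Fin (2 * m - k)) (Fin (2 * m - k)) ℝ)))) * O * Oᵀ).trace /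
          (4 * m)) ∂μ
      = 1 / 2 - k / (4 * m) := by
  have hOOt : O * Oᵀ = 1 := (mem_orthogonalGroup_iff (Fin (2 * m)) ℝ).mp hO
  have htrace (Y : Matrix (Fin (2 * m - k)) (Fin (2 * m - k)) ℝ) :
      (reindex (finSumFinEquiv.trans (finCongr (Nat.add_sub_cancel' hk)))
          (finSumFinEquiv.trans (finCongr (Nat.add_sub_cancel' hk)))
          (fromBlocks (1 : Matrix (Fin k) (Fin k) ℝ) 0 0 Y) * O * Oᵀ).trace = k + Y.trace := by
    rw [mul_assoc, hOOt, mul_one, trace_reindex, trace_fromBlocks_zero, trace_one, Fintype.card_fin]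
  simp_rw [htrace]
  have htrace_integrable := orthogonalGroup.integrable_trace μ
  have hshifted_integrable : Integrable (fun Y : orthogonalGroup (Fin (2 * m - k)) ℝ =>
      (k : ℝ) + (Y : Matrix (Fin (2 * m - k)) (Fin (2 * m - k)) ℝ).trace) μ :=
    (integrable_const _).add htrace_integrable
  rw [integral_sub (integrable_const _) (hshifted_integrable.div_const _),
    integral_div (4 * (m : ℝ)), integral_add (integrable_const _) htrace_integrable,
    orthogonalGroup.integral_trace_eq_zero]
  simp

/-- **No-Free-Lunch theorem for learning linear optical unitaries from
coherent-state training data.**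
Let `m ≥ 1`, `0 ≤ k ≤ 2m`, and fix `O ∈ O(2m)`.  For `Y ∈ O(2m−k)`, the
hypothesis `T_Y := (I_k ⊕ Y) · O` agrees with the target `O` on the
`k`-dimensional subspace spanned by `k` linearly independent coherent-state
training vectors.  Averaging the risk `R_O(T) = 1/2 − Tr(T Oᵀ)/(4m)` over the
Haar probability measure on `O(2m−k)` gives `1/2 − k/(4m)`. -/
theorem nfl_linear_optical_coherent_states
    (m k : ℕ) (hm : 1 ≤ m) (hk : k ≤ 2 * m)
    (O : Matrix (Fin (2 * m)) (Fin (2 * m)) ℝ)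
    (hO : O ∈ Matrix.orthogonalGroup (Fin (2 * m)) ℝ)
    (μ : Measure (Matrix.orthogonalGroup (Fin (2 * m - k)) ℝ))
    [μ.IsHaarMeasure] [IsProbabilityMeasure μ] :
    ∫ Y, (1 / 2 -
        ((Matrix.reindex (finSumFinEquiv.trans (finCongr (Nat.add_sub_cancel' hk)))
            (finSumFinEquiv.trans (finCongr (Nat.add_sub_cancel' hk)))
            (Matrix.fromBlocks (1 : Matrix (Fin k) (Fin k) ℝ) 0 0
              ((Y : Matrix (Fin (2 * m - k)) (Fin (2 * m - k)) ℝ)))) * O * Oᵀ).trace /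
          (4 * m)) ∂μ
      = 1 / 2 - k / (4 * m) :=
  nfl_linear_optical_coherent_states_general m k hk O hO μ
end

section
/- (No-Free-Lunch corollary for learning Gaussian unitaries via the Bloch–Messiah decomposition.) Let m ≥ 1 and let k be an even integer with 0 ≤ k < 2m, and set n := (2m−k)/2 if 2m−k is even (as it is). For any fixed real (2m−k)×(2m−k) matrix F, and for W₁, W₂ independent and Haar-distributed on the compact group K := O(2m−k) ∩ Sp(2m−k, ℝ), the expected reduced risk satisfies ∫∫ [ 1/2 − Tr( I_k ⊕ (W₁ F W₂) )/(4m) ] dμ(W₁) dμ(W₂) = 1/2 − k/(4m). -/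
open MeasureTheory Matrix

/-- The standard symplectic form `Δ = ⊕_{j} [[0,1],[−1,0]]` on `ℝᴺ`. -/
def stdSymplecticForm (N : ℕ) : Matrix (Fin N) (Fin N) ℝ :=
  Matrix.of fun i j =>
    if (i : ℕ) % 2 = 0 ∧ (j : ℕ) = (i : ℕ) + 1 then 1
    else if (j : ℕ) % 2 = 0 ∧ (i : ℕ) = (j : ℕ) + 1 then -1
    else 0

/-- `O(N) ∩ Sp(N, ℝ)`: real `N × N` matrices that are both orthogonal and
symplectic. -/
def orthoSymplectic (N : ℕ) : Set (Matrix (Fin N) (Fin N) ℝ) :=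
  {W | Wᵀ * W = 1 ∧ Wᵀ * stdSymplecticForm N * W = stdSymplecticForm N}

/-!
Since `-1` is orthogonal and symplectic, a measure on `K` invariant under left translation by `K`
is invariant under `W ↦ -W`. For fixed `W₁` the map `W₂ ↦ Tr (W₁ F W₂)` is odd, and integrable
because the entries of an orthogonal matrix are bounded by `1`, so its mean vanishes. What remains
of the trace is the `k` contributed by the identity block.
-/

lemma neg_one_mem_orthoSymplectic (N : ℕ) :
    (-1 : Matrix (Fin N) (Fin N) ℝ) ∈ orthoSymplectic N := by
  constructor <;> simp

lemma Matrix.abs_apply_le_one_of_transpose_mul_self_eq_one {n : Type*} [Fintype n]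
    [DecidableEq n] {W : Matrix n n ℝ} (hW : Wᵀ * W = 1) (i j : n) : |W i j| ≤ 1 := by
  have hcol : ∑ l, W l j ^ 2 = 1 := by
    simpa [mul_apply, sq] using congrFun (congrFun hW j) j
  rw [← sq_le_one_iff_abs_le_one, ← hcol]
  exact Finset.single_le_sum (f := fun l => W l j ^ 2) (fun l _ => sq_nonneg _)
    (Finset.mem_univ i)

lemma Matrix.trace_fromBlocks {l n R : Type*} [Fintype l] [Fintype n] [AddCommMonoid R]
    (A : Matrix l l R) (B : Matrix l n R) (C : Matrix n l R) (D : Matrix n n R) :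
    (fromBlocks A B C D).trace = A.trace + D.trace := by
  simp [trace, Fintype.sum_sum_type]

theorem Function.Odd.integral_eq_zero {G E : Type*} [MeasurableSpace G]
    [AddGroup G] [MeasurableNeg G] [NormedAddCommGroup E] [NormedSpace ℝ E]
    {f : G → E} (hf : f.Odd) (μ : Measure G) [μ.IsNegInvariant] :
    ∫ x, f x ∂μ = 0 := by
  have h := integral_neg_eq_self f μ
  simp only [hf _, integral_neg] at h
  have : IsAddTorsionFree E := .of_isTorsionFree ℝ E
  exact neg_eq_self.mp h

section OrthogonalMeasure

variable {N : ℕ} (μ : Measure (Matrix (Fin N) (Fin N) ℝ))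

lemma isNegInvariant_of_map_neg_one_mul (h : μ.map (fun W => (-1) * W) = μ) :
    μ.IsNegInvariant :=
  ⟨by simpa [Measure.neg] using h⟩

lemma integral_trace_mul_eq_zero [μ.IsNegInvariant] (A : Matrix (Fin N) (Fin N) ℝ) :
    ∫ W, (A * W).trace ∂μ = 0 :=
  Function.Odd.integral_eq_zero (fun W => by simp) μ

lemma integrable_trace_mul_of_ae_transpose_mul_self_eq_one [IsFiniteMeasure μ]
    (hμ : ∀ᵐ W ∂μ, Wᵀ * W = 1) (A : Matrix (Fin N) (Fin N) ℝ) :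
    Integrable (fun W => (A * W).trace) μ := by
  have hentry (i j : Fin N) : Integrable (fun W : Matrix (Fin N) (Fin N) ℝ => W i j) μ :=
    .of_bound (continuous_apply_apply i j).aestronglyMeasurable 1
      (hμ.mono fun W hW => abs_apply_le_one_of_transpose_mul_self_eq_one hW i j)
  simp only [trace, diag, mul_apply]
  exact integrable_finsetSum _ fun i _ => integrable_finsetSum _ fun j _ =>
    (hentry j i).const_mul _

end OrthogonalMeasure

theorem nfl_gaussian_bloch_messiah_general
    (m k : ℕ)
    (F : Matrix (Fin (2 * m - k)) (Fin (2 * m - k)) ℝ)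
    (μ : Measure (Matrix (Fin (2 * m - k)) (Fin (2 * m - k)) ℝ))
    [IsProbabilityMeasure μ]
    (hsupp : μ (orthoSymplectic (2 * m - k))ᶜ = 0)
    (hinv : ∀ g ∈ orthoSymplectic (2 * m - k),
      Measure.map (fun W => g * W) μ = μ) :
    ∫ W₁, ∫ W₂,
        (1 / 2 -
          (Matrix.fromBlocks (1 : Matrix (Fin k) (Fin k) ℝ) 0 0 (W₁ * F * W₂)).trace /
            (4 * m)) ∂μ ∂μ
      = 1 / 2 - k / (4 * m) := by
  have : μ.IsNegInvariant :=
    isNegInvariant_of_map_neg_one_mul μ (hinv (-1) (neg_one_mem_orthoSymplectic _))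
  have horth : ∀ᵐ W ∂μ, Wᵀ * W = 1 := (ae_iff.2 hsupp).mono fun _ hW => hW.1
  have hinner : ∀ W₁, ∫ W₂, (1 / 2 -
      (fromBlocks (1 : Matrix (Fin k) (Fin k) ℝ) 0 0 (W₁ * F * W₂)).trace / (4 * m)) ∂μ
        = 1 / 2 - k / (4 * m) := fun W₁ => by
    simp_rw [trace_fromBlocks, trace_one, Fintype.card_fin, add_div, ← sub_sub]
    rw [integral_sub (integrable_const _)
        ((integrable_trace_mul_of_ae_transpose_mul_self_eq_one μ horth _).div_const _),
      integral_div, integral_trace_mul_eq_zero]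
    simp
  simp_rw [hinner]
  simp

/-- **No-Free-Lunch corollary for learning Gaussian unitaries via the
Bloch–Messiah decomposition.**
Let `m ≥ 1` and let `k` be even with `0 ≤ k < 2m`.  For any fixed real
`(2m−k) × (2m−k)` matrix `F`, and `W₁, W₂` independent Haar-distributed on the
compact group `K = O(2m−k) ∩ Sp(2m−k, ℝ)` (encoded as a probability measure on
matrices supported on `K` and invariant under left translation by every element
of `K`), the expected reduced risk satisfies
`∫∫ [1/2 − Tr(I_k ⊕ (W₁ F W₂))/(4m)] dμ(W₁) dμ(W₂) = 1/2 − k/(4m)`. -/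
theorem nfl_gaussian_bloch_messiah
    (m k : ℕ) (hm : 1 ≤ m) (hke : k % 2 = 0) (hk : k < 2 * m)
    (F : Matrix (Fin (2 * m - k)) (Fin (2 * m - k)) ℝ)
    (μ : Measure (Matrix (Fin (2 * m - k)) (Fin (2 * m - k)) ℝ))
    [IsProbabilityMeasure μ]
    (hsupp : μ (orthoSymplectic (2 * m - k))ᶜ = 0)
    (hinv : ∀ g ∈ orthoSymplectic (2 * m - k),
      Measure.map (fun W => g * W) μ = μ) :
    ∫ W₁, ∫ W₂,
        (1 / 2 -
          (Matrix.fromBlocks (1 : Matrix (Fin k) (Fin k) ℝ) 0 0 (W₁ * F * W₂)).trace /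
            (4 * m)) ∂μ ∂μ
      = 1 / 2 - k / (4 * m) :=
  nfl_gaussian_bloch_messiah_general m k F μ hsupp hinv
end

section
/- Let m ≥ 1, let L ∈ O(2m), let i ∈ {1,…,2m}, and let μ be the Haar probability measure on O(2m). Then ∫_{O(2m)} ( e_iᵀ Wᵀ L W e_i )² dμ(W) = ( 2m + Tr(L²) + (Tr L)² ) / (4m² + 4m). -/
open MeasureTheory Matrix

/-!
Let `x = W e_i`. Left invariance of `μ` makes the law of `x` invariant under every orthogonal `U`,
and Householder reflections `1 - 2 w wᵀ / ‖w‖²` supply enough such `U`: one maps any vector to any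
other of the same length, so the law of `u ⬝ x` depends only on `‖u‖`. Hence `E[x_a⁴]` does not
depend on `a`, and comparing `x_a ± x_b` with `√2 x_a` gives `E[x_a⁴] = 3 E[x_a² x_b²]` for
`a ≠ b`; reflecting in a coordinate hyperplane kills every fourth moment whose indices do not pair
up. Since `‖x‖ = 1`, `∑ E[x_a² x_b²] = 1`, which gives
`E[x_a x_b x_c x_d] = (δ_ab δ_cd + δ_ac δ_bd + δ_ad δ_bc) / (n (n + 2))`. Expanding `(xᵀ L x)²`
then yields `((tr L)² + tr (L Lᵀ) + tr (L²)) / (n (n + 2))`, and `tr (L Lᵀ) = n` for orthogonal `L`.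
-/

namespace Matrix

variable {ι : Type*} [Fintype ι] [DecidableEq ι]

instance : CompactSpace (orthogonalGroup ι ℝ) :=
  isCompact_iff_compactSpace.mp <| IsCompact.of_isClosed_subset
    (isCompact_univ_pi fun _ => isCompact_univ_pi fun _ => isCompact_Icc (a := (-1 : ℝ)) (b := 1))
    isClosed_unitary fun _ hA a _ b _ => abs_le.mp (entry_norm_bound_of_unitary hA a b)

-- `2 / 0 = 0` makes `householder 0 = 1`.
noncomputable def householder (w : ι → ℝ) : Matrix ι ι ℝ :=
  1 - (2 / (w ⬝ᵥ w)) • vecMulVec w w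

theorem transpose_householder (w : ι → ℝ) : (householder w)ᵀ = householder w := by
  simp only [householder, transpose_sub, transpose_one, transpose_smul, transpose_vecMulVec]

theorem householder_mulVec (w v : ι → ℝ) :
    householder w *ᵥ v = v - (2 * (w ⬝ᵥ v) / (w ⬝ᵥ w)) • w := by
  rw [householder, sub_mulVec, one_mulVec, smul_mulVec, vecMulVec_mulVec, op_smul_eq_smul,
    smul_smul]
  ring_nf

theorem householder_mem_orthogonalGroup (w : ι → ℝ) :
    householder w ∈ orthogonalGroup ι ℝ := by
  have hP : vecMulVec w w * vecMulVec w w = (w ⬝ᵥ w) • vecMulVec w w := by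
    rw [vecMulVec_mul_vecMulVec, ← vecMulVec_smul]
  rw [mem_orthogonalGroup_iff, transpose_householder, householder, sub_mul, mul_sub, mul_sub,
    one_mul, mul_one, one_mul, smul_mul_smul_comm, hP, smul_smul]
  rcases eq_or_ne (w ⬝ᵥ w) 0 with h | h
  · simp [h]
  · rw [show 2 / (w ⬝ᵥ w) * (2 / (w ⬝ᵥ w)) * (w ⬝ᵥ w) = 2 / (w ⬝ᵥ w) + 2 / (w ⬝ᵥ w) by
      field_simp; ring, add_smul]
    abel

theorem householder_sub_mulVec {u v : ι → ℝ} (h : u ⬝ᵥ u = v ⬝ᵥ v) :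
    householder (u - v) *ᵥ u = v := by
  rw [householder_mulVec]
  rcases eq_or_ne (u - v) 0 with huv | huv
  · simp [sub_eq_zero.mp huv]
  · have hw : (u - v) ⬝ᵥ (u - v) = 2 * ((u - v) ⬝ᵥ u) := by
      simp only [sub_dotProduct, dotProduct_sub, dotProduct_comm v u, h]
      ring
    have hw0 : (u - v) ⬝ᵥ (u - v) ≠ 0 := by rwa [Ne, dotProduct_self_eq_zero]
    rw [← hw, div_self hw0, one_smul, sub_sub_cancel]

theorem householder_single_mulVec (e : ι) (v : ι → ℝ) :
    householder (Pi.single e 1) *ᵥ v = fun j => (if j = e then -1 else 1) * v j := by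
  ext j
  rw [householder_mulVec]
  rcases eq_or_ne j e with rfl | hj
  · simp only [single_dotProduct, dotProduct_single, Pi.single_eq_same, if_true, Pi.sub_apply,
      Pi.smul_apply, smul_eq_mul]
    ring
  · simp [hj]

end Matrix

namespace HaarOrthogonal

theorem exists_sign_mul_eq_neg_one {α : Type*} [DecidableEq α] {a b c d : α}
    (h₁ : ¬(a = b ∧ c = d)) (h₂ : ¬(a = c ∧ b = d)) (h₃ : ¬(a = d ∧ b = c)) :
    ∃ e, (if a = e then -1 else 1) * (if b = e then -1 else 1) * (if c = e then -1 else 1) *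
      (if d = e then -1 else 1) = (-1 : ℝ) := by
  by_cases hb : b = a
  · have hcd : c ≠ d := fun h => h₁ ⟨hb.symm, h⟩
    by_cases hc : c = a
    · exact ⟨d, by simp [hb, hc, (hc ▸ hcd : a ≠ d)]⟩
    · exact ⟨c, by simp [hb, Ne.symm hc, hcd.symm]⟩
  by_cases hc : c = a
  · have hbd : b ≠ d := fun h => h₂ ⟨hc.symm, h⟩
    exact ⟨b, by simp [hc, Ne.symm hb, hbd.symm]⟩
  by_cases hd : d = a
  · have hbc : b ≠ c := fun h => h₃ ⟨hd.symm, h⟩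
    exact ⟨b, by simp [hd, Ne.symm hb, hbc.symm]⟩
  exact ⟨a, by simp [hb, hc, hd]⟩

variable {n : ℕ}

def column (i : Fin n) (W : orthogonalGroup (Fin n) ℝ) : Fin n → ℝ :=
  fun a => (W : Matrix (Fin n) (Fin n) ℝ) a i

variable (i : Fin n)

@[fun_prop]
theorem continuous_column : Continuous (column i) :=
  continuous_pi fun a =>
    (continuous_apply i).comp ((continuous_apply a).comp continuous_subtype_val)

theorem column_mul (U W : orthogonalGroup (Fin n) ℝ) :
    column i (U * W) = (U : Matrix (Fin n) (Fin n) ℝ) *ᵥ column i W := by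
  ext a
  simp [column, mul_apply, mulVec, dotProduct]

theorem column_dotProduct_self (W : orthogonalGroup (Fin n) ℝ) :
    column i W ⬝ᵥ column i W = 1 := by
  simpa [mul_apply, dotProduct, column] using
    congr_fun₂ ((mem_orthogonalGroup_iff' _ _).mp W.2) i i

theorem transpose_mul_mul_apply_self (W : orthogonalGroup (Fin n) ℝ)
    (L : Matrix (Fin n) (Fin n) ℝ) :
    ((W : Matrix (Fin n) (Fin n) ℝ)ᵀ * L * W) i i = column i W ⬝ᵥ L *ᵥ column i W := by
  simp only [mul_apply, transpose_apply, mulVec, dotProduct, column, Finset.mul_sum,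
    Finset.sum_mul, mul_assoc]
  exact Finset.sum_comm

variable (μ : Measure (orthogonalGroup (Fin n) ℝ))

theorem integrable_of_continuous [IsFiniteMeasure μ] {f : orthogonalGroup (Fin n) ℝ → ℝ}
    (hf : Continuous f) : Integrable f μ :=
  hf.integrable_of_hasCompactSupport (HasCompactSupport.of_compactSpace f)

noncomputable def fourthMoment (a b c d : Fin n) : ℝ :=
  ∫ W, column i W a * column i W b * column i W c * column i W d ∂μ

theorem fourthMoment_swap_middle (a b c d : Fin n) :
    fourthMoment i μ a b c d = fourthMoment i μ a c b d := by
  simp only [fourthMoment, mul_right_comm _ (column _ _ b)]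

theorem fourthMoment_swap_last (a b c d : Fin n) :
    fourthMoment i μ a b c d = fourthMoment i μ a b d c := by
  simp only [fourthMoment, mul_right_comm _ (column _ _ c)]

theorem integral_sq_column_dotProduct_mulVec [IsFiniteMeasure μ] (L : Matrix (Fin n) (Fin n) ℝ) :
    ∫ W, (column i W ⬝ᵥ L *ᵥ column i W) ^ 2 ∂μ
      = ∑ a, ∑ b, ∑ c, ∑ d, L a b * L c d * fourthMoment i μ a b c d := by
  have hexpand : ∀ x : Fin n → ℝ, (x ⬝ᵥ L *ᵥ x) ^ 2
      = ∑ a, ∑ b, ∑ c, ∑ d, L a b * L c d * (x a * x b * x c * x d) := fun x => by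
    simp only [dotProduct, mulVec, sq, Finset.mul_sum, Finset.sum_mul]
    refine Finset.sum_congr rfl fun _ _ => Finset.sum_congr rfl fun _ _ =>
      Finset.sum_congr rfl fun _ _ => Finset.sum_congr rfl fun _ _ => by ring
  simp_rw [hexpand]
  simp (disch := intro _ _; exact integrable_of_continuous μ (by fun_prop)) only
    [integral_finsetSum, integral_const_mul, fourthMoment]

theorem sum_fourthMoment_pair [IsProbabilityMeasure μ] :
    ∑ a, ∑ b, fourthMoment i μ a a b b = 1 := by
  simpa [column_dotProduct_self, one_apply] using
    (integral_sq_column_dotProduct_mulVec i μ 1).symm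

section Invariance

variable [μ.IsMulLeftInvariant]

theorem integral_comp_mulVec_column (U : orthogonalGroup (Fin n) ℝ) (F : (Fin n → ℝ) → ℝ) :
    ∫ W, F ((U : Matrix (Fin n) (Fin n) ℝ) *ᵥ column i W) ∂μ = ∫ W, F (column i W) ∂μ := by
  simp_rw [← column_mul]
  exact integral_mul_left_eq_self (fun W => F (column i W)) U

theorem integral_comp_dotProduct_column {u v : Fin n → ℝ} (h : u ⬝ᵥ u = v ⬝ᵥ v) (F : ℝ → ℝ) :
    ∫ W, F (u ⬝ᵥ column i W) ∂μ = ∫ W, F (v ⬝ᵥ column i W) ∂μ := by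
  rw [← integral_comp_mulVec_column i μ ⟨_, householder_mem_orthogonalGroup (u - v)⟩
    fun x => F (u ⬝ᵥ x)]
  simp only [dotProduct_mulVec, ← mulVec_transpose, transpose_householder,
    householder_sub_mulVec h]

theorem fourthMoment_eq_zero_of_sign (e : Fin n) {a b c d : Fin n}
    (h : (if a = e then -1 else 1) * (if b = e then -1 else 1) * (if c = e then -1 else 1) *
      (if d = e then -1 else 1) = (-1 : ℝ)) :
    fourthMoment i μ a b c d = 0 := by
  have hflip := integral_comp_mulVec_column i μ
    ⟨_, householder_mem_orthogonalGroup (Pi.single e 1)⟩ fun x => x a * x b * x c * x d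
  have hneg : ∀ x : Fin n → ℝ, (if a = e then -1 else 1) * x a * ((if b = e then -1 else 1) * x b)
      * ((if c = e then -1 else 1) * x c) * ((if d = e then -1 else 1) * x d)
      = -(x a * x b * x c * x d) := fun x => by
    linear_combination (x a * x b * x c * x d) * h
  simp only [householder_single_mulVec, hneg, integral_neg] at hflip
  rw [fourthMoment]
  linarith

theorem fourthMoment_self_eq_self (a b : Fin n) :
    fourthMoment i μ a a a a = fourthMoment i μ b b b b := by
  simpa only [fourthMoment, single_dotProduct, one_mul] using integral_comp_dotProduct_column i μ
    (u := Pi.single a 1) (v := Pi.single b 1) (by simp) fun t => t * t * t * t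

theorem fourthMoment_self_eq_three_mul [IsFiniteMeasure μ] {a b : Fin n} (hab : a ≠ b) :
    fourthMoment i μ a a a a = 3 * fourthMoment i μ a a b b := by
  have hsqrt : ∀ t : ℝ, (√2 * t) ^ 4 = 4 * (t * t * t * t) := fun t => by
    rw [mul_pow, show √2 ^ 4 = (√2 ^ 2) ^ 2 by ring, Real.sq_sqrt zero_le_two]
    ring
  have hplus := integral_comp_dotProduct_column i μ
    (u := Pi.single a 1 + Pi.single b 1) (v := Pi.single a √2) (by simp [hab]; norm_num) (· ^ 4)
  have hminus := integral_comp_dotProduct_column i μ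
    (u := Pi.single a 1 - Pi.single b 1) (v := Pi.single a √2) (by simp [hab]; norm_num) (· ^ 4)
  simp only [add_dotProduct, sub_dotProduct, single_dotProduct, one_mul, hsqrt,
    integral_const_mul] at hplus hminus
  change _ = 4 * fourthMoment i μ a a a a at hplus hminus
  have hsum : ∫ W, ((column i W a + column i W b) ^ 4 + (column i W a - column i W b) ^ 4) ∂μ
      = 2 * fourthMoment i μ a a a a + 12 * fourthMoment i μ a a b b
        + 2 * fourthMoment i μ b b b b := by
    simp only [fourthMoment]
    rw [← integral_const_mul, ← integral_const_mul, ← integral_const_mul, ← integral_add,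
      ← integral_add]
    · congr with W
      ring
    all_goals exact integrable_of_continuous μ (by fun_prop)
  rw [integral_add (integrable_of_continuous μ (by fun_prop))
    (integrable_of_continuous μ (by fun_prop)), hplus, hminus,
    fourthMoment_self_eq_self i μ b a] at hsum
  linarith

theorem fourthMoment_self [IsProbabilityMeasure μ] (a : Fin n) :
    fourthMoment i μ a a a a = 3 / (n * (n + 2)) := by
  set A := fourthMoment i μ a a a a
  have hpair : ∀ b c, fourthMoment i μ b b c c = A / 3 + if b = c then 2 * A / 3 else 0 := by
    intro b c
    rcases eq_or_ne b c with rfl | hbc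
    · rw [fourthMoment_self_eq_self i μ b a, if_pos rfl]
      ring
    · have h3 := fourthMoment_self_eq_three_mul i μ hbc
      rw [fourthMoment_self_eq_self i μ b a] at h3
      rw [if_neg hbc]
      linarith
  have hn : (n : ℝ) ≠ 0 := Nat.cast_ne_zero.mpr i.pos.ne'
  have hsum := sum_fourthMoment_pair i μ
  simp only [hpair, Finset.sum_add_distrib, Finset.sum_ite_eq, Finset.mem_univ, if_true,
    Finset.sum_const, Finset.card_univ, Fintype.card_fin, nsmul_eq_mul] at hsum
  field_simp
  linear_combination 3 * hsum

theorem fourthMoment_pair [IsProbabilityMeasure μ] {a b : Fin n} (hab : a ≠ b) :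
    fourthMoment i μ a a b b = 1 / (n * (n + 2)) := by
  have h3 := fourthMoment_self_eq_three_mul i μ hab
  rw [fourthMoment_self, div_eq_mul_one_div 3] at h3
  linarith

theorem fourthMoment_eq [IsProbabilityMeasure μ] (a b c d : Fin n) :
    fourthMoment i μ a b c d
      = ((if a = b ∧ c = d then 1 else 0) + (if a = c ∧ b = d then 1 else 0)
          + (if a = d ∧ b = c then 1 else 0)) / (n * (n + 2)) := by
  by_cases h₁ : a = b ∧ c = d
  · obtain ⟨rfl, rfl⟩ := h₁
    rcases eq_or_ne a c with rfl | hac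
    · simp only [and_self, if_true, fourthMoment_self]
      ring
    · simp [fourthMoment_pair i μ hac, hac]
  by_cases h₂ : a = c ∧ b = d
  · obtain ⟨rfl, rfl⟩ := h₂
    have hab : a ≠ b := fun h => h₁ ⟨h, h⟩
    simp [fourthMoment_swap_middle, fourthMoment_pair i μ hab, hab]
  by_cases h₃ : a = d ∧ b = c
  · obtain ⟨rfl, rfl⟩ := h₃
    have hab : a ≠ b := fun h => h₁ ⟨h, h.symm⟩
    simp [fourthMoment_swap_last, fourthMoment_swap_middle, fourthMoment_pair i μ hab, hab]
  obtain ⟨e, he⟩ := exists_sign_mul_eq_neg_one h₁ h₂ h₃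
  simp [fourthMoment_eq_zero_of_sign i μ e he, h₁, h₂, h₃]

theorem integral_sq_transpose_mul_mul_apply_self [IsProbabilityMeasure μ]
    (L : Matrix (Fin n) (Fin n) ℝ) :
    ∫ W, (((W : Matrix (Fin n) (Fin n) ℝ)ᵀ * L * W) i i) ^ 2 ∂μ
      = (L.trace ^ 2 + (L * Lᵀ).trace + (L * L).trace) / (n * (n + 2)) := by
  simp_rw [transpose_mul_mul_apply_self, integral_sq_column_dotProduct_mulVec, fourthMoment_eq]
  simp only [mul_div_assoc', ← Finset.sum_div, mul_add, Finset.sum_add_distrib, ite_and, mul_ite,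
    mul_one, mul_zero, Finset.sum_ite_irrel, Finset.sum_const_zero, Finset.sum_ite_eq,
    Finset.mem_univ, if_true]
  simp only [trace, diag, mul_apply, transpose_apply, sq, Finset.sum_mul_sum]

end Invariance

end HaarOrthogonal

theorem haar_second_moment_quadratic_form_general
    (m : ℕ)
    (L : Matrix (Fin (2 * m)) (Fin (2 * m)) ℝ)
    (hL : L ∈ Matrix.orthogonalGroup (Fin (2 * m)) ℝ)
    (i : Fin (2 * m))
    (μ : Measure (Matrix.orthogonalGroup (Fin (2 * m)) ℝ))
    [μ.IsHaarMeasure] [IsProbabilityMeasure μ] :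
    ∫ W, (((W : Matrix (Fin (2 * m)) (Fin (2 * m)) ℝ)ᵀ * L *
            (W : Matrix (Fin (2 * m)) (Fin (2 * m)) ℝ)) i i) ^ 2 ∂μ
      = (2 * m + (L * L).trace + L.trace ^ 2) / (4 * m ^ 2 + 4 * m) := by
  rw [HaarOrthogonal.integral_sq_transpose_mul_mul_apply_self i μ L,
    (mem_orthogonalGroup_iff _ _).mp hL, trace_one, Fintype.card_fin]
  push_cast
  ring_nf

/-- **Second moment of a quadratic form along a Haar-random orthogonal frame.**
For `m ≥ 1`, `L ∈ O(2m)`, a standard basis vector `e_i` of `ℝ^{2m}`, and `μ`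
the Haar probability measure on `O(2m)`,
`∫ (e_iᵀ Wᵀ L W e_i)² dμ(W) = (2m + Tr(L²) + (Tr L)²)/(4m² + 4m)`. -/
theorem haar_second_moment_quadratic_form
    (m : ℕ) (hm : 1 ≤ m)
    (L : Matrix (Fin (2 * m)) (Fin (2 * m)) ℝ)
    (hL : L ∈ Matrix.orthogonalGroup (Fin (2 * m)) ℝ)
    (i : Fin (2 * m))
    (μ : Measure (Matrix.orthogonalGroup (Fin (2 * m)) ℝ))
    [μ.IsHaarMeasure] [IsProbabilityMeasure μ] :
    ∫ W, (((W : Matrix (Fin (2 * m)) (Fin (2 * m)) ℝ)ᵀ * L *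
            (W : Matrix (Fin (2 * m)) (Fin (2 * m)) ℝ)) i i) ^ 2 ∂μ
      = (2 * m + (L * L).trace + L.trace ^ 2) / (4 * m ^ 2 + 4 * m) :=
  haar_second_moment_quadratic_form_general m L hL i μ
end

section
/- Let n ≥ 1 and let μ be the Haar probability measure on the compact group O(n). Then ∫_{O(n)} Tr(Y²) dμ(Y) = 1. -/
/-!
Expanding the trace, `∫ Tr(Y²) = ∑ i j, ∫ Y i j * Y j i`. Translating on the left by the
reflection in the `i`-th coordinate negates row `i` of `Y`, so the terms with `i ≠ j` vanish.
Translating by permutation matrices shows that `∫ Y i j * Y i j` does not depend on `i`, and since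
every column of `Y` is a unit vector these `n` equal integrals sum to `1`; hence each is `1 / n`.
-/

open MeasureTheory Matrix

namespace Matrix

variable {ι R : Type*} [Fintype ι] [DecidableEq ι] [CommRing R]

theorem permMatrix_mem_orthogonalGroup (σ : Equiv.Perm ι) :
    σ.permMatrix R ∈ orthogonalGroup ι R := by
  rw [mem_orthogonalGroup_iff, transpose_permMatrix, ← permMatrix_mul, inv_mul_cancel,
    permMatrix_one]

theorem diagonal_mem_orthogonalGroup {d : ι → R} (hd : ∀ i, d i * d i = 1) :
    diagonal d ∈ orthogonalGroup ι R := by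
  rw [mem_orthogonalGroup_iff, diagonal_transpose, diagonal_mul_diagonal, funext hd, diagonal_one]

namespace orthogonalGroup

def permutation (σ : Equiv.Perm ι) : orthogonalGroup ι R :=
  ⟨σ.permMatrix R, permMatrix_mem_orthogonalGroup σ⟩

def reflection (i : ι) : orthogonalGroup ι R :=
  ⟨diagonal (Function.update 1 i (-1)), diagonal_mem_orthogonalGroup fun k => by
    rcases eq_or_ne k i with rfl | hk <;> simp [*]⟩

@[simp]
theorem permutation_mul_apply (σ : Equiv.Perm ι) (Y : orthogonalGroup ι R) (i j : ι) :
    (permutation σ * Y : orthogonalGroup ι R) i j = Y (σ i) j := by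
  simp [permutation, PEquiv.toMatrix_toPEquiv_mul]

@[simp]
theorem reflection_mul_apply (i : ι) (Y : orthogonalGroup ι R) (k j : ι) :
    (reflection i * Y : orthogonalGroup ι R) k j =
      Function.update (1 : ι → R) i (-1) k * Y k j := by
  simp [reflection]

theorem sum_apply_mul_self (Y : orthogonalGroup ι R) (j : ι) : ∑ k, Y k j * Y k j = 1 := by
  simpa [mul_apply, one_apply] using congrFun₂ ((mem_orthogonalGroup_iff' _ _).mp Y.2) j j

theorem abs_apply_le_one (Y : orthogonalGroup ι ℝ) (i j : ι) : |Y i j| ≤ 1 :=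
  entry_norm_bound_of_unitary Y.2 i j

theorem continuous_apply_apply (i j : ι) : Continuous fun Y : orthogonalGroup ι ℝ => Y i j :=
  continuous_subtype_val.matrix_elem i j

section Integral

variable [MeasurableSpace (orthogonalGroup ι ℝ)] [BorelSpace (orthogonalGroup ι ℝ)]
  (μ : Measure (orthogonalGroup ι ℝ))

theorem integrable_apply_mul_apply [IsFiniteMeasure μ] (i j k l : ι) :
    Integrable (fun Y : orthogonalGroup ι ℝ => Y i j * Y k l) μ := by
  refine .of_bound
    ((continuous_apply_apply i j).mul (continuous_apply_apply k l)).aestronglyMeasurable 1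
    (.of_forall fun Y => ?_)
  rw [Real.norm_eq_abs, abs_mul]
  exact mul_le_one₀ (abs_apply_le_one Y i j) (abs_nonneg _) (abs_apply_le_one Y k l)

variable [μ.IsMulLeftInvariant]

theorem integral_apply_mul_apply_eq_zero {i k : ι} (hik : i ≠ k) (j l : ι) :
    ∫ Y : orthogonalGroup ι ℝ, Y i j * Y k l ∂μ = 0 := by
  have h := integral_mul_left_eq_self (μ := μ) (fun Y : orthogonalGroup ι ℝ => Y i j * Y k l)
    (reflection i)
  simp only [reflection_mul_apply, Function.update_self, Function.update_of_ne hik.symm,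
    Pi.one_apply, one_mul, neg_mul, integral_neg] at h
  linarith

theorem integral_apply_mul_self_eq (i k j : ι) :
    ∫ Y : orthogonalGroup ι ℝ, Y i j * Y i j ∂μ = ∫ Y : orthogonalGroup ι ℝ, Y k j * Y k j ∂μ := by
  simpa using (integral_mul_left_eq_self (μ := μ)
    (fun Y : orthogonalGroup ι ℝ => Y i j * Y i j) (permutation (Equiv.swap i k))).symm

variable [IsProbabilityMeasure μ]

theorem integral_apply_mul_self (i j : ι) :
    ∫ Y : orthogonalGroup ι ℝ, Y i j * Y i j ∂μ = (Fintype.card ι : ℝ)⁻¹ := by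
  have h : ∑ k, ∫ Y : orthogonalGroup ι ℝ, Y k j * Y k j ∂μ = 1 := by
    rw [← integral_finsetSum _ fun k _ => integrable_apply_mul_apply μ k j k j]
    simp [sum_apply_mul_self]
  simp only [← integral_apply_mul_self_eq μ i, Finset.sum_const, Finset.card_univ,
    nsmul_eq_mul] at h
  exact eq_inv_of_mul_eq_one_right h

theorem integral_trace_mul_self [Nonempty ι] :
    ∫ Y : orthogonalGroup ι ℝ, ((Y : Matrix ι ι ℝ) * (Y : Matrix ι ι ℝ)).trace ∂μ = 1 := by
  have hint := integrable_apply_mul_apply μ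
  calc ∫ Y : orthogonalGroup ι ℝ, ((Y : Matrix ι ι ℝ) * (Y : Matrix ι ι ℝ)).trace ∂μ
      = ∑ i, ∑ j, ∫ Y : orthogonalGroup ι ℝ, Y i j * Y j i ∂μ := by
        simp only [trace, diag, mul_apply]
        rw [integral_finsetSum _ fun i _ => integrable_finsetSum _ fun j _ => hint i j j i]
        exact Finset.sum_congr rfl fun i _ => integral_finsetSum _ fun j _ => hint i j j i
    _ = ∑ _i : ι, (Fintype.card ι : ℝ)⁻¹ := Finset.sum_congr rfl fun i _ => by
        rw [Finset.sum_eq_single i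
          (fun j _ hji => integral_apply_mul_apply_eq_zero μ hji.symm _ _) (by simp),
          integral_apply_mul_self]
    _ = 1 := by
        rw [Finset.sum_const, Finset.card_univ, nsmul_eq_mul,
          mul_inv_cancel₀ (by positivity)]

end Integral

end orthogonalGroup

end Matrix

/-- **Haar average of `Tr(Y²)` over the orthogonal group.**
If `μ` is the Haar probability measure on the compact group `O(n)` (`n ≥ 1`),
then `∫ Tr(Y²) dμ(Y) = 1`. -/
theorem haar_integral_trace_sq_orthogonalGroup
    (n : ℕ) (hn : 1 ≤ n)
    (μ : Measure (Matrix.orthogonalGroup (Fin n) ℝ))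
    [μ.IsHaarMeasure] [IsProbabilityMeasure μ] :
    ∫ Y, ((Y : Matrix (Fin n) (Fin n) ℝ) * (Y : Matrix (Fin n) (Fin n) ℝ)).trace ∂μ = 1 := by
  have : Nonempty (Fin n) := ⟨⟨0, hn⟩⟩
  exact orthogonalGroup.integral_trace_mul_self μ
end
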